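/- With d: F_2 → ℤ as defined via normal forms (d(α^{ε_1}β^{δ_1}⋯α^{ε_n}β^{δ_n}) = Σ_i δ_i Σ_{j≤i} ε_j), for every w ∈ F_2 we have d(w^{-1}) = e_α(w)·e_β(w) − d(w). -/

import Mathlib

/-- sign of a `Bool` exponent: `true ↦ 1`, `false ↦ -1`. -/
def sgn (b : Bool) : ℤ := if b then 1 else -1

/-- Auxiliary computation of Morita's function `d` on a (reduced) word in the
free group on two generators (`false` = α, `true` = β), keeping a running
sum `acc` of the α-exponents read so far.  Each letter `β^{δ}` contributes
`δ * acc`. -/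
def dWord : List (Bool × Bool) → ℤ → ℤ
  | [], _ => 0
  | (g, s) :: rest, acc =>
      if g then sgn s * acc + dWord rest acc
      else dWord rest (acc + sgn s)

/-- Morita's function `d : F₂ → ℤ`, defined on the normal form
`α^{ε_1}β^{δ_1}⋯α^{ε_n}β^{δ_n}` by `d = Σ_i δ_i (ε_1 + ⋯ + ε_i)`,
computed here from the reduced word. -/
def moritaD (w : FreeGroup Bool) : ℤ := dWord w.toWord 0

/-- Exponent sum of the generator `g` in the word `w`. -/
def expSum (g : Bool) (w : FreeGroup Bool) : ℤ :=
  (w.toWord.map fun p => if p.1 = g then sgn p.2 else 0).sum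

/-- The generator α of F₂. -/
def genα : FreeGroup Bool := FreeGroup.of false

/-- The generator β of F₂. -/
def genβ : FreeGroup Bool := FreeGroup.of true

/-!
On words, `d` is twisted additive, `d(uv) = d(u) + d(v) + e_α(u)·e_β(v)`, and `e(v⁻¹) = -e(v)`.
With `(uv)⁻¹ = v⁻¹u⁻¹` these two facts show that the words satisfying the formula are closed
under concatenation. A single letter satisfies it because `d` vanishes on letters and a letter
is a power of α or of β, so `e_α(x)·e_β(x) = 0`.
-/

lemma sgn_not (s : Bool) : sgn (!s) = -sgn s := by
  cases s <;> rfl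

def wordExpSum (g : Bool) (L : List (Bool × Bool)) : ℤ :=
  (L.map fun p => if p.1 = g then sgn p.2 else 0).sum

lemma wordExpSum_nil (g : Bool) : wordExpSum g [] = 0 := rfl

lemma wordExpSum_cons (g : Bool) (p : Bool × Bool) (L : List (Bool × Bool)) :
    wordExpSum g (p :: L) = (if p.1 = g then sgn p.2 else 0) + wordExpSum g L := by
  simp only [wordExpSum, List.map_cons, List.sum_cons]

lemma wordExpSum_append (g : Bool) (L₁ L₂ : List (Bool × Bool)) :
    wordExpSum g (L₁ ++ L₂) = wordExpSum g L₁ + wordExpSum g L₂ := by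
  simp only [wordExpSum, List.map_append, List.sum_append]

lemma wordExpSum_invRev (g : Bool) (L : List (Bool × Bool)) :
    wordExpSum g (FreeGroup.invRev L) = -wordExpSum g L := by
  induction L with
  | nil => rfl
  | cons p L ih =>
    rw [FreeGroup.invRev_cons, wordExpSum_append, ih, wordExpSum_cons]
    obtain ⟨a, s⟩ := p
    simp only [FreeGroup.invRev, wordExpSum, List.map_cons, List.map_nil, List.reverse_cons,
      List.reverse_nil, List.nil_append, List.sum_cons, List.sum_nil, sgn_not]
    split_ifs <;> ring

lemma dWord_eq_add_mul (L : List (Bool × Bool)) (acc : ℤ) :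
    dWord L acc = dWord L 0 + acc * wordExpSum true L := by
  induction L generalizing acc with
  | nil => simp [dWord, wordExpSum_nil]
  | cons p L ih =>
    obtain ⟨g, s⟩ := p
    cases g
    · simp only [dWord, Bool.false_eq_true, ↓reduceIte, wordExpSum_cons, ih (acc + sgn s),
        ih (0 + sgn s)]
      ring
    · simp only [dWord, ↓reduceIte, wordExpSum_cons, ih acc]
      ring

lemma dWord_append (L₁ L₂ : List (Bool × Bool)) (acc : ℤ) :
    dWord (L₁ ++ L₂) acc =
      dWord L₁ acc + dWord L₂ 0 + (acc + wordExpSum false L₁) * wordExpSum true L₂ := by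
  induction L₁ generalizing acc with
  | nil => simp [dWord, wordExpSum_nil, dWord_eq_add_mul L₂ acc]
  | cons p L ih =>
    obtain ⟨g, s⟩ := p
    cases g
    · simp only [List.cons_append, dWord, Bool.false_eq_true, ↓reduceIte, ih,
        wordExpSum_cons]
      ring
    · simp only [List.cons_append, dWord, ↓reduceIte, ih, wordExpSum_cons,
        Bool.true_eq_false]
      ring

lemma dWord_append_zero (L₁ L₂ : List (Bool × Bool)) :
    dWord (L₁ ++ L₂) 0 = dWord L₁ 0 + dWord L₂ 0 + wordExpSum false L₁ * wordExpSum true L₂ := by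
  rw [dWord_append, zero_add]

lemma dWord_invRev_singleton (p : Bool × Bool) :
    dWord (FreeGroup.invRev [p]) 0 = wordExpSum false [p] * wordExpSum true [p] - dWord [p] 0 := by
  obtain ⟨g, s⟩ := p
  cases g <;> simp [dWord, wordExpSum, FreeGroup.invRev]

lemma dWord_invRev_append {L₁ L₂ : List (Bool × Bool)}
    (h₁ : dWord (FreeGroup.invRev L₁) 0 = wordExpSum false L₁ * wordExpSum true L₁ - dWord L₁ 0)
    (h₂ : dWord (FreeGroup.invRev L₂) 0 = wordExpSum false L₂ * wordExpSum true L₂ - dWord L₂ 0) :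
    dWord (FreeGroup.invRev (L₁ ++ L₂)) 0 =
      wordExpSum false (L₁ ++ L₂) * wordExpSum true (L₁ ++ L₂) - dWord (L₁ ++ L₂) 0 := by
  rw [FreeGroup.invRev_append, dWord_append_zero, dWord_append_zero, h₁, h₂, wordExpSum_invRev,
    wordExpSum_invRev, wordExpSum_append, wordExpSum_append]
  ring

lemma dWord_invRev (L : List (Bool × Bool)) :
    dWord (FreeGroup.invRev L) 0 = wordExpSum false L * wordExpSum true L - dWord L 0 := by
  induction L with
  | nil => rfl
  | cons p L ih => exact dWord_invRev_append (L₁ := [p]) (dWord_invRev_singleton p) ih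

/-- For every `w ∈ F₂`, `d(w⁻¹) = e_α(w)·e_β(w) − d(w)`. -/
theorem morita_d_inv (w : FreeGroup Bool) :
    moritaD w⁻¹ = expSum false w * expSum true w - moritaD w := by
  rw [moritaD, moritaD, FreeGroup.toWord_inv]
  exact dWord_invRev w.toWord
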